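/- arXiv:2508.17228 — 2 statements merged into one kernel-verified Lean document; each statement's English description precedes it below -/
import Mathlib

section
/- Let λ ∈ ℝ and let (Y_j)_{j≥1} be i.i.d. real random variables with all moments finite. For all integers n, l ≥ 0, the probabilistic degenerate Bell numbers φ^Y_{n,λ} = φ^Y_{n,λ}(1) satisfy: φ^Y_{l+n,λ} = Σ_{k=0}^{n} Σ_{m=0}^{l} C(l,m) (1/k!) Σ_{l₁+⋯+l_k = n, each lᵢ ≥ 1} C(n; l₁,…,l_k) · E[(S_k − nλ)_{l−m,λ} · ∏_{i=1}^{k} (Y_i)_{l_i,λ}] · φ^Y_{m,λ}, where the inner sum is over all k-tuples (l₁,…,l_k) of positive integers with l₁+⋯+l_k = n and C(n; l₁,…,l_k) = n!/(l₁!⋯l_k!) is the multinomial coefficient. -/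
open MeasureTheory ProbabilityTheory Finset

/-- The degenerate falling factorial `(x)_{n,λ} = ∏_{i=0}^{n-1} (x - iλ)`. -/
noncomputable def degFall (lam x : ℝ) (n : ℕ) : ℝ :=
  ∏ i ∈ Finset.range n, (x - (i : ℝ) * lam)

/-- The probabilistic degenerate Stirling numbers of the second kind associated with `Y`:
`{n \brace k}_{Y,λ} = (1/k!) ∑_{j=0}^{k} (-1)^{k-j} C(k,j) E[(S_j)_{n,λ}]`. -/
noncomputable def probDegStirling {Ω : Type*} [MeasurableSpace Ω] (μ : Measure Ω)
    (Y : ℕ → Ω → ℝ) (lam : ℝ) (n k : ℕ) : ℝ :=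
  (1 / (Nat.factorial k : ℝ)) * ∑ j ∈ Finset.range (k + 1),
    (-1 : ℝ) ^ (k - j) * (Nat.choose k j : ℝ) *
      ∫ ω, degFall lam (∑ i ∈ Finset.range j, Y i ω) n ∂μ

/-- The probabilistic degenerate Bell polynomials associated with `Y`:
`φ^Y_{n,λ}(x) = ∑_{k=0}^{n} {n \brace k}_{Y,λ} x^k`. -/
noncomputable def probDegBell {Ω : Type*} [MeasurableSpace Ω] (μ : Measure Ω)
    (Y : ℕ → Ω → ℝ) (lam : ℝ) (n : ℕ) (x : ℝ) : ℝ :=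
  ∑ k ∈ Finset.range (n + 1), probDegStirling μ Y lam n k * x ^ k

/-- The probabilistic degenerate Bell numbers associated with `Y`: `φ^Y_{n,λ} = φ^Y_{n,λ}(1)`. -/
noncomputable def probDegBellNum {Ω : Type*} [MeasurableSpace Ω] (μ : Measure Ω)
    (Y : ℕ → Ω → ℝ) (lam : ℝ) (n : ℕ) : ℝ :=
  probDegBell μ Y lam n 1

/-!
Write `w r = E[(Y)_{r,λ}]` and let `W = ∑_{r ≥ 1} w r x^r / r!`. The degenerate falling factorial
is of binomial type, `(x + y)_{N,λ} = ∑_c C(N,c) (x)_{c,λ} (y)_{N-c,λ}`, so by independence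
`E[(S_j)_{N,λ}] = N! [x^N] (1 + W)^j`. Its `k`-th forward difference in `j` at `0` is both
`k! {N brace k}_{Y,λ}` and `N! [x^N] W^k`, hence `φ^Y_{N,λ} = N! [x^N] exp W` is a complete Bell
polynomial in the `w r`. In the same way the expectation on the right-hand side is the coefficient
of `x^n y^q / (n! q!)` in `(W(x+y) - W(y))^k`, and the theorem is the coefficient form of
`exp W(x+y) = exp (W(x+y) - W(y)) · exp W(y)`. This is proved by induction on `n`: as functions
of `x`, both sides solve `∂ₓF = W'(x+y) F` and agree at `x = 0`.
-/

open scoped Nat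
open Finset.HasAntidiagonal

theorem Nat.multinomial_insertNth {k : ℕ} (i : Fin (k + 1)) (a : ℕ) (t : Fin k → ℕ) :
    multinomial univ (Fin.insertNth i a t) = (a + ∑ j, t j).choose a * multinomial univ t := by
  have hsum : ∑ j, (Fin.insertNth i a t : Fin (k + 1) → ℕ) j = a + ∑ j, t j := by
    simp [Fin.sum_univ_succAbove _ i]
  have hprod : ∏ j, ((Fin.insertNth i a t : Fin (k + 1) → ℕ) j)! = a ! * ∏ j, (t j)! := by
    simp [Fin.prod_univ_succAbove _ i]
  have hpos : 0 < a ! * ∏ j, (t j)! := Nat.mul_pos a.factorial_pos (Nat.prod_factorial_pos _ _)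
  refine Nat.eq_of_mul_eq_mul_left hpos ?_
  rw [← hprod, multinomial_spec, hprod, hsum, ← Nat.add_choose_mul_factorial_mul_factorial,
    ← multinomial_spec, Nat.choose_symm_add]
  ring

namespace Finset.Nat

theorem sum_antidiagonalTuple_succ {M : Type*} [AddCommMonoid M] {k : ℕ} (i : Fin (k + 1))
    (N : ℕ) (F : (Fin (k + 1) → ℕ) → M) :
    ∑ t ∈ antidiagonalTuple (k + 1) N, F t =
      ∑ p ∈ antidiagonal N, ∑ t ∈ antidiagonalTuple k p.2, F (Fin.insertNth i p.1 t) := by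
  rw [sum_sigma']
  refine sum_nbij' (fun t => ⟨(t i, N - t i), Fin.removeNth i t⟩)
    (fun x => Fin.insertNth i x.1.1 x.2) ?_ ?_ (fun _ _ => by simp) ?_ (fun _ _ => by simp)
  · intro t ht
    have := Fin.sum_univ_succAbove t i
    simp only [mem_antidiagonalTuple] at ht
    simp only [mem_sigma, HasAntidiagonal.mem_antidiagonal, mem_antidiagonalTuple, Fin.removeNth]
    omega
  · rintro ⟨⟨a, b⟩, t⟩ h
    simp only [mem_sigma, HasAntidiagonal.mem_antidiagonal, mem_antidiagonalTuple] at h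
    rw [mem_antidiagonalTuple, Fin.sum_univ_succAbove _ i]
    simp [h.1, h.2]
  · rintro ⟨⟨a, b⟩, t⟩ h
    simp only [mem_sigma, HasAntidiagonal.mem_antidiagonal, mem_antidiagonalTuple] at h
    simp only [Fin.insertNth_apply_same, Fin.removeNth_insertNth, Sigma.mk.injEq, Prod.mk.injEq,
      heq_eq_eq, and_true, true_and]
    omega

theorem exists_eq_zero_of_mem_antidiagonalTuple {k N : ℕ} {t : Fin k → ℕ}
    (ht : t ∈ antidiagonalTuple k N) (hN : N < k) : ∃ i, t i = 0 := by
  by_contra! h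
  have := card_nsmul_le_sum univ t 1 fun i _ => Nat.one_le_iff_ne_zero.mpr (h i)
  rw [mem_antidiagonalTuple] at ht
  simp only [card_univ, Fintype.card_fin, smul_eq_mul, mul_one, ht] at this
  omega

end Finset.Nat

theorem Finset.sum_antidiagonal_choose_succ_mul' {M : Type*} [NonAssocSemiring M]
    (f : ℕ → ℕ → M) (n : ℕ) :
    ∑ p ∈ antidiagonal (n + 1), ((n + 1).choose p.1 : M) * f p.1 p.2 =
      ∑ p ∈ antidiagonal n, (n.choose p.1 : M) * f (p.1 + 1) p.2 +
        ∑ p ∈ antidiagonal n, (n.choose p.1 : M) * f p.1 (p.2 + 1) := by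
  rw [sum_antidiagonal_choose_succ_mul, add_comm]
  congr 1
  refine sum_congr rfl fun p hp => ?_
  rw [Nat.choose_symm_of_eq_add (HasAntidiagonal.mem_antidiagonal.1 hp).symm]

section Convolution

variable {R : Type*} [CommSemiring R]

/-- With `F = ∑ f a xᵃ / a!` and `G = ∑ g b xᵇ / b!`, `binomConv f g N = N! [x^N] (F * G)`;
similarly `multinomConv f N = N! [x^N] ∏ i, Fᵢ`. -/
def binomConv : (ℕ → R) →ₗ[R] (ℕ → R) →ₗ[R] ℕ → R :=
  LinearMap.mk₂ R (fun f g N => ∑ p ∈ antidiagonal N, (N.choose p.1 : R) * f p.1 * g p.2)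
    (fun _ _ _ => by ext; simp [mul_add, add_mul, sum_add_distrib])
    (fun _ _ _ => by ext; simp [mul_sum, mul_assoc, mul_left_comm])
    (fun _ _ _ => by ext; simp [mul_add, sum_add_distrib])
    (fun _ _ _ => by ext; simp [mul_sum, mul_assoc, mul_left_comm])

def multinomConv {k : ℕ} (f : Fin k → ℕ → R) (N : ℕ) : R :=
  ∑ t ∈ Finset.Nat.antidiagonalTuple k N, (Nat.multinomial univ t : R) * ∏ i, f i (t i)

theorem binomConv_apply (f g : ℕ → R) (N : ℕ) :
    binomConv f g N = ∑ p ∈ antidiagonal N, (N.choose p.1 : R) * f p.1 * g p.2 :=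
  rfl

theorem binomConv_apply_zero (f g : ℕ → R) : binomConv f g 0 = f 0 * g 0 := by
  simp [binomConv_apply]

theorem binomConv_comm (f g : ℕ → R) : binomConv f g = binomConv g f := by
  ext N
  rw [binomConv_apply, binomConv_apply, ← Finset.Nat.sum_antidiagonal_swap]
  refine sum_congr rfl fun p hp => ?_
  rw [Nat.choose_symm_of_eq_add (HasAntidiagonal.mem_antidiagonal.1 hp).symm]
  simp only [Prod.fst_swap, Prod.snd_swap]
  ring

theorem binomConv_single_zero_left (a : R) (g : ℕ → R) :
    binomConv (Pi.single 0 a) g = a • g := by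
  ext N
  rw [binomConv_apply, sum_eq_single (0, N)]
  · simp
  · rintro ⟨_ | b, c⟩ _ hne
    · simp_all
    · simp
  · simp

theorem binomConv_single_zero_right (f : ℕ → R) (a : R) :
    binomConv f (Pi.single 0 a) = a • f := by
  rw [binomConv_comm, binomConv_single_zero_left]

theorem binomConv_apply_succ (f g : ℕ → R) (N : ℕ) :
    binomConv f g (N + 1) =
      binomConv (fun a => f (a + 1)) g N + binomConv f (fun b => g (b + 1)) N := by
  simp only [binomConv_apply, mul_assoc]
  exact sum_antidiagonal_choose_succ_mul' (fun a b => f a * g b) N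

theorem binomConv_apply_add (f g : ℕ → R) (l n : ℕ) :
    binomConv f g (l + n) = ∑ x ∈ antidiagonal n,
      (n.choose x.1 : R) * binomConv (fun a => f (a + x.1)) (fun b => g (b + x.2)) l := by
  induction n generalizing l with
  | zero => simp
  | succ n ih =>
    rw [← add_assoc, add_right_comm, ih, sum_antidiagonal_choose_succ_mul'
      (fun i j => binomConv (fun a => f (a + i)) (fun b => g (b + j)) l), ← sum_add_distrib]
    refine sum_congr rfl fun x _ => ?_
    rw [binomConv_apply_succ, mul_add]
    simp only [add_assoc, add_comm 1]

theorem multinomConv_fin_zero (f : Fin 0 → ℕ → R) : multinomConv f = Pi.single 0 1 := by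
  ext (_ | N) <;> simp [multinomConv]

theorem multinomConv_apply_zero {k : ℕ} (f : Fin k → ℕ → R) :
    multinomConv f 0 = ∏ i, f i 0 := by
  simp [multinomConv, Finset.Nat.antidiagonalTuple_zero_right, Nat.multinomial]

theorem multinomConv_eq_binomConv {k : ℕ} (i : Fin (k + 1)) (f : Fin (k + 1) → ℕ → R) :
    multinomConv f = binomConv (f i) (multinomConv fun j => f (i.succAbove j)) := by
  ext N
  rw [multinomConv, Finset.Nat.sum_antidiagonalTuple_succ i, binomConv_apply]
  refine sum_congr rfl fun p hp => ?_
  rw [multinomConv, mul_sum]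
  refine sum_congr rfl fun t ht => ?_
  rw [Finset.Nat.mem_antidiagonalTuple] at ht
  rw [Nat.multinomial_insertNth, ht, HasAntidiagonal.mem_antidiagonal.1 hp,
    Fin.prod_univ_succAbove _ i]
  simp only [Fin.insertNth_apply_same, Fin.insertNth_apply_succAbove, Nat.cast_mul]
  ring

theorem multinomConv_fin_one (f : Fin 1 → ℕ → R) : multinomConv f = f 0 := by
  rw [multinomConv_eq_binomConv 0, multinomConv_fin_zero, binomConv_single_zero_right, one_smul]

theorem binomConv_eq_multinomConv (f g : ℕ → R) : binomConv f g = multinomConv ![f, g] := by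
  rw [multinomConv_eq_binomConv 0, multinomConv_fin_one]
  rfl

theorem binomConv_assoc (f g h : ℕ → R) :
    binomConv (binomConv f g) h = binomConv f (binomConv g h) := by
  have h₀ : multinomConv ![f, g, h] = binomConv f (binomConv g h) := by
    rw [multinomConv_eq_binomConv 0, binomConv_eq_multinomConv g h]
    congr 2
  have h₂ : multinomConv ![f, g, h] = binomConv h (binomConv f g) := by
    rw [multinomConv_eq_binomConv 2, binomConv_eq_multinomConv f g]
    congr 2
  rw [← h₀, h₂, binomConv_comm]

theorem multinomConv_eq_zero_of_eq_zero {k : ℕ} {f : Fin k → ℕ → R} (i : Fin k)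
    (hi : f i = 0) : multinomConv f = 0 := by
  ext N
  refine sum_eq_zero fun t _ => ?_
  rw [prod_eq_zero (mem_univ i) (by rw [hi, Pi.zero_apply]), mul_zero]

theorem multinomConv_eq_zero_of_lt {k N : ℕ} {f : Fin k → ℕ → R} (hf : ∀ i, f i 0 = 0)
    (hN : N < k) : multinomConv f N = 0 := by
  refine sum_eq_zero fun t ht => ?_
  obtain ⟨i, hi⟩ := Finset.Nat.exists_eq_zero_of_mem_antidiagonalTuple ht hN
  rw [prod_eq_zero (mem_univ i) (by rw [hi, hf]), mul_zero]

/-- The coefficient of `xⁿ y^q / (n! q!)` in `Uᵏ`, where `U = ∑ u a b xᵃ yᵇ / (a! b!)`. -/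
def multinomConv₂ (u : ℕ → ℕ → R) (k n : ℕ) : ℕ → R :=
  ∑ t ∈ Finset.Nat.antidiagonalTuple k n,
    (Nat.multinomial univ t : R) • multinomConv fun i => u (t i)

/-- The coefficients of `W(x + y) - W(y)` in the sense of `multinomConv₂`, where
`W = ∑ f a xᵃ / a!`. -/
def incrementCoeff (f : ℕ → R) (a b : ℕ) : R :=
  if a = 0 then 0 else f (a + b)

theorem multinomConv₂_zero_zero (u : ℕ → ℕ → R) : multinomConv₂ u 0 0 = Pi.single 0 1 := by
  simp [multinomConv₂, multinomConv_fin_zero]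

theorem multinomConv₂_zero_succ (u : ℕ → ℕ → R) (n : ℕ) : multinomConv₂ u 0 (n + 1) = 0 := by
  simp [multinomConv₂]

theorem multinomConv₂_apply_zero (u : ℕ → ℕ → R) (k n : ℕ) :
    multinomConv₂ u k n 0 = multinomConv (fun _ : Fin k => fun a => u a 0) n := by
  simp only [multinomConv₂, Finset.sum_apply, Pi.smul_apply, smul_eq_mul, multinomConv_apply_zero]
  rfl

theorem multinomConv₂_eq_zero_of_lt {u : ℕ → ℕ → R} (hu : u 0 = 0) {k n : ℕ} (hn : n < k) :
    multinomConv₂ u k n = 0 := by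
  refine sum_eq_zero fun t ht => ?_
  obtain ⟨i, hi⟩ := Finset.Nat.exists_eq_zero_of_mem_antidiagonalTuple ht hn
  rw [multinomConv_eq_zero_of_eq_zero i (by rw [hi, hu]), smul_zero]

theorem multinomConv₂_incrementCoeff_apply (f : ℕ → R) (k n q : ℕ) :
    multinomConv₂ (incrementCoeff f) k n q =
      ∑ t ∈ (Finset.Nat.antidiagonalTuple k n).filter (fun t => ∀ i, 0 < t i),
        (Nat.multinomial univ t : R) * multinomConv (fun i b => f (t i + b)) q := by
  rw [multinomConv₂, Finset.sum_apply, sum_filter]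
  refine sum_congr rfl fun t _ => ?_
  split_ifs with hpos
  · have hinc : (fun i => incrementCoeff f (t i)) = fun i b => f (t i + b) := by
      ext i b
      simp [incrementCoeff, (hpos i).ne']
    rw [Pi.smul_apply, hinc, smul_eq_mul]
  · push Not at hpos
    obtain ⟨i, hi⟩ := hpos
    rw [multinomConv_eq_zero_of_eq_zero i (by ext; simp [incrementCoeff, Nat.le_zero.1 hi]),
      smul_zero, Pi.zero_apply]

end Convolution

theorem fwdDiff_iter_multinomConv_const {R : Type*} [CommRing R] (f : ℕ → R) (k N : ℕ) :
    (fwdDiff 1)^[k] (fun j => multinomConv (fun _ : Fin j => f) N) 0 =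
      multinomConv (fun _ : Fin k => f - Pi.single 0 1) N := by
  induction k generalizing N with
  | zero => simp [multinomConv_fin_zero]
  | succ k ih =>
    have hΔ : fwdDiff 1 (fun j => multinomConv (fun _ : Fin j => f) N) = ∑ p ∈ antidiagonal N,
        ((N.choose p.1 : R) * (f - Pi.single 0 1 : ℕ → R) p.1) •
          fun j => multinomConv (fun _ : Fin j => f) p.2 := by
      ext j
      have hsub : binomConv (f - Pi.single 0 1) (multinomConv fun _ : Fin j => f) =
          binomConv f (multinomConv fun _ : Fin j => f) - multinomConv fun _ : Fin j => f := by
        rw [map_sub, LinearMap.sub_apply, binomConv_single_zero_left, one_smul]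
      rw [fwdDiff, multinomConv_eq_binomConv 0 fun _ : Fin (j + 1) => f, ← Pi.sub_apply, ← hsub,
        binomConv_apply]
      simp [Finset.sum_apply, mul_assoc]
    rw [Function.iterate_succ_apply, hΔ, fwdDiff_iter_finsetSum, Finset.sum_apply,
      multinomConv_eq_binomConv 0, binomConv_apply]
    simp [fwdDiff_iter_const_smul, ih, mul_assoc]

section Bell

variable {K : Type*} [Field K]

/-- The complete Bell polynomial `Y_N (f 1, f 2, …) = N! [x^N] exp (∑ f a xᵃ / a!)`; the cut-off
`k ≤ N` is only harmless when `f 0 = 0`. -/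
def completeBell (f : ℕ → K) (N : ℕ) : K :=
  ∑ k ∈ range (N + 1), (k ! : K)⁻¹ * multinomConv (fun _ : Fin k => f) N

theorem completeBell_eq_sum_of_le {f : ℕ → K} (hf : f 0 = 0) {N M : ℕ} (h : N ≤ M) :
    completeBell f N = ∑ k ∈ range (M + 1), (k ! : K)⁻¹ * multinomConv (fun _ : Fin k => f) N := by
  refine sum_subset (range_subset_range.2 (by omega)) fun k _ hk => ?_
  rw [multinomConv_eq_zero_of_lt (fun _ => hf) (by simpa using hk), mul_zero]

variable [CharZero K]

theorem multinomConv₂_succ_succ (u : ℕ → ℕ → K) (k n : ℕ) :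
    multinomConv₂ u (k + 1) (n + 1) = (k + 1 : K) • ∑ x ∈ antidiagonal n,
      (n.choose x.1 : K) • binomConv (u (x.1 + 1)) (multinomConv₂ u k x.2) := by
  set S := ∑ x ∈ antidiagonal n,
    (n.choose x.1 : K) • binomConv (u (x.1 + 1)) (multinomConv₂ u k x.2)
  -- Weight each term by `∑ i, t i = n + 1`; splitting off coordinate `i` gives `(n + 1) • S`.
  have key : ∀ i : Fin (k + 1), ∑ t ∈ Finset.Nat.antidiagonalTuple (k + 1) (n + 1),
      ((t i : K) * Nat.multinomial univ t) • multinomConv (fun j => u (t j)) =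
        (n + 1 : K) • S := by
    intro i
    rw [Finset.Nat.sum_antidiagonalTuple_succ i, Finset.Nat.sum_antidiagonal_succ]
    simp only [Fin.insertNth_apply_same, Nat.cast_zero, zero_mul, zero_smul, sum_const_zero,
      zero_add]
    rw [smul_sum]
    refine sum_congr rfl fun p hp => ?_
    rw [multinomConv₂, map_sum (binomConv (u (p.1 + 1))), smul_sum, smul_sum]
    refine sum_congr rfl fun t ht => ?_
    rw [Finset.Nat.mem_antidiagonalTuple] at ht
    have hsum : p.1 + 1 + p.2 = n + 1 := by
      rw [add_right_comm, HasAntidiagonal.mem_antidiagonal.1 hp]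
    rw [multinomConv_eq_binomConv i, Nat.multinomial_insertNth, ht, hsum]
    simp only [Fin.insertNth_apply_same, Fin.insertNth_apply_succAbove, map_smul, smul_smul]
    congr 1
    rw [← Nat.cast_mul, ← Nat.cast_mul, ← mul_assoc, mul_comm (p.1 + 1),
      ← Nat.add_one_mul_choose_eq]
    push_cast
    ring
  have total : (n + 1 : K) • multinomConv₂ u (k + 1) (n + 1) =
      ∑ i : Fin (k + 1), ∑ t ∈ Finset.Nat.antidiagonalTuple (k + 1) (n + 1),
        ((t i : K) * Nat.multinomial univ t) • multinomConv (fun j => u (t j)) := by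
    rw [sum_comm, multinomConv₂, smul_sum]
    refine sum_congr rfl fun t ht => ?_
    rw [← sum_smul, ← sum_mul, ← Nat.cast_sum, Finset.Nat.mem_antidiagonalTuple.1 ht, smul_smul]
    push_cast
    rfl
  refine smul_right_injective (ℕ → K) (Nat.cast_add_one_ne_zero n : (n + 1 : K) ≠ 0) ?_
  simp only
  rw [total, sum_congr rfl fun i _ => key i, sum_const, card_univ, Fintype.card_fin, smul_comm,
    ← Nat.cast_smul_eq_nsmul K]
  push_cast
  rfl

theorem multinomConv_const_succ (f : ℕ → K) (k n : ℕ) :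
    multinomConv (fun _ : Fin (k + 1) => f) (n + 1) =
      (k + 1 : K) * binomConv (fun a => f (a + 1)) (multinomConv fun _ : Fin k => f) n := by
  have h := congr_fun (multinomConv₂_succ_succ (fun a _ => f a) k n) 0
  simp only [multinomConv₂_apply_zero, Pi.smul_apply, Finset.sum_apply, binomConv_apply_zero,
    smul_eq_mul] at h
  rw [h, binomConv_apply]
  simp only [mul_assoc]

theorem completeBell_succ {f : ℕ → K} (hf : f 0 = 0) (N : ℕ) :
    completeBell f (N + 1) = binomConv (fun a => f (a + 1)) (completeBell f) N := by
  have hterm : ∀ k, ((k + 1) ! : K)⁻¹ * multinomConv (fun _ : Fin (k + 1) => f) (N + 1) =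
      binomConv (fun a => f (a + 1)) ((k ! : K)⁻¹ • multinomConv fun _ : Fin k => f) N := by
    intro k
    rw [multinomConv_const_succ, map_smul, Pi.smul_apply, smul_eq_mul, Nat.factorial_succ]
    push_cast
    field_simp
  rw [completeBell, sum_range_succ', multinomConv_fin_zero, Pi.single_eq_of_ne (by omega),
    mul_zero, add_zero, sum_congr rfl fun k _ => hterm k, ← Finset.sum_apply, ← map_sum,
    binomConv_apply, binomConv_apply]
  refine sum_congr rfl fun p hp => ?_
  rw [completeBell_eq_sum_of_le hf (antidiagonal.snd_le hp), Finset.sum_apply]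
  simp only [Pi.smul_apply, smul_eq_mul]

theorem completeBell_add {f : ℕ → K} (hf : f 0 = 0) (n l : ℕ) :
    completeBell f (l + n) = ∑ k ∈ range (n + 1),
      (k ! : K)⁻¹ * binomConv (multinomConv₂ (incrementCoeff f) k n) (completeBell f) l := by
  let P : ℕ → ℕ → K := fun n l => completeBell f (l + n)
  let Q : ℕ → ℕ → K := fun n => ∑ k ∈ range (n + 1),
    (k ! : K)⁻¹ • binomConv (multinomConv₂ (incrementCoeff f) k n) (completeBell f)
  have hP : ∀ n, P (n + 1) = ∑ x ∈ antidiagonal n,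
      (n.choose x.1 : K) • binomConv (incrementCoeff f (x.1 + 1)) (P x.2) := by
    intro n
    ext l
    simp only [P, Finset.sum_apply, Pi.smul_apply, smul_eq_mul]
    rw [← add_assoc, completeBell_succ hf, binomConv_apply_add]
    refine sum_congr rfl fun x _ => ?_
    have hx : incrementCoeff f (x.1 + 1) = fun a => f (a + x.1 + 1) := by
      ext b
      simp only [incrementCoeff, Nat.add_eq_zero_iff, one_ne_zero, and_false, if_false]
      ring_nf
    rw [hx]
  have hQ : ∀ n, Q (n + 1) = ∑ x ∈ antidiagonal n,
      (n.choose x.1 : K) • binomConv (incrementCoeff f (x.1 + 1)) (Q x.2) := by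
    intro n
    simp only [Q]
    rw [sum_range_succ', multinomConv₂_zero_succ, map_zero, LinearMap.zero_apply, smul_zero,
      add_zero]
    simp only [multinomConv₂_succ_succ, map_smul, map_sum, LinearMap.smul_apply,
      LinearMap.sum_apply, binomConv_assoc, smul_sum, smul_smul]
    rw [sum_comm]
    refine sum_congr rfl fun x hx => ?_
    have hsub : range (x.2 + 1) ⊆ range (n + 1) :=
      range_subset_range.2 (Nat.succ_le_succ (antidiagonal.snd_le hx))
    rw [← sum_subset hsub fun k _ hk => ?_]
    · refine sum_congr rfl fun k _ => ?_
      rw [Nat.factorial_succ]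
      push_cast
      field_simp
    · rw [multinomConv₂_eq_zero_of_lt (by ext; simp [incrementCoeff]) (by simpa using hk)]
      simp
  suffices h : ∀ n, P n = Q n by
    simpa [P, Q, Finset.sum_apply] using congr_fun (h n) l
  intro n
  induction n using Nat.strong_induction_on with
  | _ n ih =>
    cases n with
    | zero => ext l; simp [P, Q, multinomConv₂_zero_zero, binomConv_single_zero_left]
    | succ n =>
      rw [hP, hQ]
      refine sum_congr rfl fun x hx => ?_
      rw [ih x.2 (Nat.lt_succ_of_le (antidiagonal.snd_le hx))]

end Bell

section DegFall

theorem degFall_zero (lam x : ℝ) : degFall lam x 0 = 1 := by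
  simp [degFall]

theorem degFall_succ (lam x : ℝ) (n : ℕ) :
    degFall lam x (n + 1) = degFall lam x n * (x - n * lam) :=
  prod_range_succ _ _

theorem degFall_add (lam x : ℝ) (a b : ℕ) :
    degFall lam x (a + b) = degFall lam x a * degFall lam (x - a * lam) b := by
  rw [degFall, degFall, degFall, prod_range_add]
  congr 1
  refine prod_congr rfl fun i _ => ?_
  push_cast
  ring

theorem degFall_zero_left (lam : ℝ) : degFall lam 0 = Pi.single 0 1 := by
  ext (_ | n)
  · simp [degFall]
  · simp [degFall, prod_range_succ']

theorem degFall_add_left (lam x y : ℝ) :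
    degFall lam (x + y) = binomConv (degFall lam x) (degFall lam y) := by
  ext N
  induction N with
  | zero => simp [degFall_zero, binomConv_apply_zero]
  | succ N ih =>
    rw [degFall_succ, ih, binomConv_apply_succ, binomConv_apply, binomConv_apply, binomConv_apply,
      sum_mul, ← sum_add_distrib]
    refine sum_congr rfl fun p hp => ?_
    have hN : (N : ℝ) = p.1 + p.2 := by
      exact_mod_cast (HasAntidiagonal.mem_antidiagonal.1 hp).symm
    rw [degFall_succ, degFall_succ, hN]
    ring

theorem degFall_sum (lam : ℝ) {k : ℕ} (x : Fin k → ℝ) :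
    degFall lam (∑ i, x i) = multinomConv fun i => degFall lam (x i) := by
  induction k with
  | zero => simp [degFall_zero_left, multinomConv_fin_zero]
  | succ k ih =>
    rw [Fin.sum_univ_succ, degFall_add_left, ih, multinomConv_eq_binomConv 0]
    simp only [Fin.succAbove_zero]

theorem continuous_degFall (lam : ℝ) (r : ℕ) : Continuous fun x => degFall lam x r := by
  unfold degFall
  fun_prop

end DegFall

theorem ProbabilityTheory.iIndepFun.integrable_fun_prod_comp {Ω ι 𝕜 : Type*}
    [MeasurableSpace Ω] {μ : Measure Ω} [Fintype ι] [NormedCommRing 𝕜] {β : ι → Type*}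
    {mβ : ∀ i, MeasurableSpace (β i)} {X : ∀ i, Ω → β i} {f : ∀ i, β i → 𝕜}
    (hX : iIndepFun X μ) (mX : ∀ i, AEMeasurable (X i) μ)
    (hf : ∀ i, Integrable (f i) (μ.map (X i))) :
    Integrable (fun ω => ∏ i, f i (X i ω)) μ := by
  have := hX.isProbabilityMeasure
  have := fun i => Measure.isProbabilityMeasure_map (mX i)
  have hprod : Integrable (fun x : ∀ i, β i => ∏ i, f i (x i)) (μ.map fun ω i => X i ω) := by
    rw [hX.map_fun_eq_pi_map mX]
    exact Integrable.fintype_prod_dep hf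
  exact hprod.comp_aemeasurable (aemeasurable_pi_lambda _ mX)

section Moments

variable {Ω : Type*} [MeasurableSpace Ω] {μ : Measure Ω}

noncomputable def degFallMoment (μ : Measure Ω) (X : Ω → ℝ) (lam : ℝ) (r : ℕ) : ℝ :=
  ∫ ω, degFall lam (X ω) r ∂μ

theorem degFallMoment_zero [IsProbabilityMeasure μ] (X : Ω → ℝ) (lam : ℝ) :
    degFallMoment μ X lam 0 = 1 := by
  simp [degFallMoment, degFall_zero]

theorem integrable_degFall_comp {X : Ω → ℝ} (hX : AEStronglyMeasurable X μ)
    (hmom : ∀ n : ℕ, Integrable (fun ω => |X ω| ^ n) μ) (lam : ℝ) (r : ℕ) :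
    Integrable (fun ω => degFall lam (X ω) r) μ := by
  have hpoly : ∀ x, degFall lam x r =
      (∏ j ∈ range r, (Polynomial.X - Polynomial.C ((j : ℝ) * lam))).eval x := by
    simp [degFall, Polynomial.eval_prod]
  simp_rw [hpoly, Polynomial.eval_eq_sum_range]
  refine integrable_finsetSum _ fun j _ => Integrable.const_mul ?_ _
  exact (hmom j).mono' (hX.pow j) (ae_of_all _ fun ω => by simp)

variable {Y : ℕ → Ω → ℝ}

theorem integrable_prod_degFall (hmeas : ∀ i, Measurable (Y i)) (hindep : iIndepFun Y μ)
    (hident : ∀ i, IdentDistrib (Y i) (Y 0) μ μ)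
    (hmom : ∀ n : ℕ, Integrable (fun ω => |Y 0 ω| ^ n) μ) (lam : ℝ) {k : ℕ} (s : Fin k → ℕ) :
    Integrable (fun ω => ∏ i : Fin k, degFall lam (Y i ω) (s i)) μ := by
  refine (hindep.precomp Fin.val_injective).integrable_fun_prod_comp
    (f := fun i x => degFall lam x (s i)) (fun i => (hmeas i).aemeasurable) fun i => ?_
  rw [integrable_map_measure (continuous_degFall lam (s i)).aestronglyMeasurable
    (hmeas i).aemeasurable]
  exact ((hident i).comp (continuous_degFall lam (s i)).measurable).integrable_iff.2
    (integrable_degFall_comp (hmeas 0).aestronglyMeasurable hmom lam (s i))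

theorem integral_prod_degFall (hmeas : ∀ i, Measurable (Y i)) (hindep : iIndepFun Y μ)
    (hident : ∀ i, IdentDistrib (Y i) (Y 0) μ μ) (lam : ℝ) {k : ℕ} (s : Fin k → ℕ) :
    ∫ ω, ∏ i : Fin k, degFall lam (Y i ω) (s i) ∂μ = ∏ i, degFallMoment μ (Y 0) lam (s i) := by
  rw [(hindep.precomp Fin.val_injective).integral_fun_prod_comp
    (f := fun i x => degFall lam x (s i)) (fun i => (hmeas i).aemeasurable)
    fun i => (continuous_degFall lam (s i)).aestronglyMeasurable]
  exact prod_congr rfl fun i _ =>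
    ((hident i).comp (continuous_degFall lam (s i)).measurable).integral_eq

theorem integral_multinomConv_degFall (hmeas : ∀ i, Measurable (Y i)) (hindep : iIndepFun Y μ)
    (hident : ∀ i, IdentDistrib (Y i) (Y 0) μ μ)
    (hmom : ∀ n : ℕ, Integrable (fun ω => |Y 0 ω| ^ n) μ) (lam : ℝ) {k : ℕ}
    (h : Fin k → ℕ → ℕ) (N : ℕ) :
    ∫ ω, multinomConv (fun i b => degFall lam (Y i ω) (h i b)) N ∂μ =
      multinomConv (fun i b => degFallMoment μ (Y 0) lam (h i b)) N := by
  unfold multinomConv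
  rw [integral_finsetSum _ fun t _ =>
    (integrable_prod_degFall hmeas hindep hident hmom lam _).const_mul _]
  refine sum_congr rfl fun t _ => ?_
  rw [integral_const_mul, integral_prod_degFall hmeas hindep hident lam]

theorem integral_degFall_sum_range (hmeas : ∀ i, Measurable (Y i)) (hindep : iIndepFun Y μ)
    (hident : ∀ i, IdentDistrib (Y i) (Y 0) μ μ)
    (hmom : ∀ n : ℕ, Integrable (fun ω => |Y 0 ω| ^ n) μ) (lam : ℝ) (j N : ℕ) :
    ∫ ω, degFall lam (∑ i ∈ range j, Y i ω) N ∂μ =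
      multinomConv (fun _ : Fin j => degFallMoment μ (Y 0) lam) N := by
  simp_rw [← Fin.sum_univ_eq_sum_range, degFall_sum]
  exact integral_multinomConv_degFall hmeas hindep hident hmom lam (fun _ b => b) N

theorem integral_degFall_sub_mul_prod (hmeas : ∀ i, Measurable (Y i)) (hindep : iIndepFun Y μ)
    (hident : ∀ i, IdentDistrib (Y i) (Y 0) μ μ)
    (hmom : ∀ n : ℕ, Integrable (fun ω => |Y 0 ω| ^ n) μ) (lam : ℝ) {k n : ℕ}
    (t : Fin k → ℕ) (ht : ∑ i, t i = n) (q : ℕ) :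
    ∫ ω, degFall lam ((∑ i ∈ range k, Y i ω) - n * lam) q *
        ∏ i : Fin k, degFall lam (Y i ω) (t i) ∂μ =
      multinomConv (fun i b => degFallMoment μ (Y 0) lam (t i + b)) q := by
  have hpt : ∀ ω, degFall lam ((∑ i ∈ range k, Y i ω) - n * lam) q *
      ∏ i : Fin k, degFall lam (Y i ω) (t i) =
        multinomConv (fun i b => degFall lam (Y i ω) (t i + b)) q := by
    intro ω
    have hsum : (∑ i ∈ range k, Y i ω) - n * lam = ∑ i : Fin k, (Y i ω - t i * lam) := by
      rw [sum_sub_distrib, ← sum_mul, Fin.sum_univ_eq_sum_range (fun i => Y i ω), ← ht]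
      push_cast
      rfl
    rw [hsum, degFall_sum, multinomConv, multinomConv, sum_mul]
    refine sum_congr rfl fun r _ => ?_
    rw [mul_assoc, ← prod_mul_distrib]
    simp only [degFall_add, mul_comm]
  simp_rw [hpt]
  exact integral_multinomConv_degFall hmeas hindep hident hmom lam (fun i b => t i + b) q

theorem probDegStirling_eq (hmeas : ∀ i, Measurable (Y i)) (hindep : iIndepFun Y μ)
    (hident : ∀ i, IdentDistrib (Y i) (Y 0) μ μ)
    (hmom : ∀ n : ℕ, Integrable (fun ω => |Y 0 ω| ^ n) μ) (lam : ℝ) (N k : ℕ) :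
    probDegStirling μ Y lam N k = (k ! : ℝ)⁻¹ *
      multinomConv (fun _ : Fin k => degFallMoment μ (Y 0) lam - Pi.single 0 1) N := by
  rw [probDegStirling, one_div, ← fwdDiff_iter_multinomConv_const, fwdDiff_iter_eq_sum_shift]
  congr 1
  refine sum_congr rfl fun j _ => ?_
  rw [integral_degFall_sum_range hmeas hindep hident hmom, zsmul_eq_mul, zero_add, smul_eq_mul,
    mul_one]
  push_cast
  ring

theorem probDegBellNum_eq_completeBell (hmeas : ∀ i, Measurable (Y i))
    (hindep : iIndepFun Y μ) (hident : ∀ i, IdentDistrib (Y i) (Y 0) μ μ)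
    (hmom : ∀ n : ℕ, Integrable (fun ω => |Y 0 ω| ^ n) μ) (lam : ℝ) (N : ℕ) :
    probDegBellNum μ Y lam N = completeBell (degFallMoment μ (Y 0) lam - Pi.single 0 1) N := by
  simp [probDegBellNum, probDegBell, completeBell, probDegStirling_eq hmeas hindep hident hmom]

theorem sum_multinomial_mul_integral_eq_multinomConv₂ (hmeas : ∀ i, Measurable (Y i))
    (hindep : iIndepFun Y μ) (hident : ∀ i, IdentDistrib (Y i) (Y 0) μ μ)
    (hmom : ∀ n : ℕ, Integrable (fun ω => |Y 0 ω| ^ n) μ) (lam : ℝ) (k n q : ℕ) :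
    ∑ t ∈ (Finset.Nat.antidiagonalTuple k n).filter (fun t => ∀ i, 0 < t i),
      (Nat.multinomial univ t : ℝ) * ∫ ω, degFall lam ((∑ i ∈ range k, Y i ω) - n * lam) q *
        ∏ i : Fin k, degFall lam (Y i ω) (t i) ∂μ =
      multinomConv₂ (incrementCoeff (degFallMoment μ (Y 0) lam - Pi.single 0 1)) k n q := by
  have hinc : incrementCoeff (degFallMoment μ (Y 0) lam - Pi.single 0 1) =
      incrementCoeff (degFallMoment μ (Y 0) lam) := by
    ext a b
    by_cases ha : a = 0 <;> simp [incrementCoeff, ha]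
  rw [hinc, multinomConv₂_incrementCoeff_apply]
  refine sum_congr rfl fun t ht => ?_
  rw [integral_degFall_sub_mul_prod hmeas hindep hident hmom lam t
    (Finset.Nat.mem_antidiagonalTuple.1 (mem_filter.1 ht).1)]

end Moments

theorem spivey_probDegBellNum_general {Ω : Type*} [MeasurableSpace Ω] (μ : Measure Ω)
    (Y : ℕ → Ω → ℝ)
    (hmeas : ∀ i, Measurable (Y i))
    (hindep : iIndepFun Y μ)
    (hident : ∀ i, IdentDistrib (Y i) (Y 0) μ μ)
    (hmom : ∀ n : ℕ, Integrable (fun ω => |Y 0 ω| ^ n) μ)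
    (lam : ℝ) (n l : ℕ) :
    probDegBellNum μ Y lam (l + n) =
      ∑ k ∈ Finset.range (n + 1), ∑ m ∈ Finset.range (l + 1),
        (Nat.choose l m : ℝ) * (1 / (Nat.factorial k : ℝ)) *
        (∑ t ∈ (Finset.Nat.antidiagonalTuple k n).filter (fun t => ∀ i, 0 < t i),
          (Nat.multinomial Finset.univ t : ℝ) *
            ∫ ω, degFall lam ((∑ i ∈ Finset.range k, Y i ω) - (n : ℝ) * lam) (l - m) *
              ∏ i : Fin k, degFall lam (Y (i : ℕ) ω) (t i) ∂μ) *
        probDegBellNum μ Y lam m := by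
  have := hindep.isProbabilityMeasure
  have hbell := probDegBellNum_eq_completeBell hmeas hindep hident hmom lam
  have hw₀ : (degFallMoment μ (Y 0) lam - Pi.single 0 1 : ℕ → ℝ) 0 = 0 := by
    simp [degFallMoment_zero]
  rw [hbell, completeBell_add hw₀]
  refine sum_congr rfl fun k _ => ?_
  rw [binomConv_comm, binomConv_apply, Finset.Nat.sum_antidiagonal_eq_sum_range_succ_mk, mul_sum]
  refine sum_congr rfl fun m _ => ?_
  rw [sum_multinomial_mul_integral_eq_multinomConv₂ hmeas hindep hident hmom, hbell, one_div]
  ring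

/-- Spivey-type relation for the probabilistic degenerate Bell numbers. -/
theorem spivey_probDegBellNum {Ω : Type*} [MeasurableSpace Ω] (μ : Measure Ω)
    [IsProbabilityMeasure μ] (Y : ℕ → Ω → ℝ)
    (hmeas : ∀ i, Measurable (Y i))
    (hindep : iIndepFun Y μ)
    (hident : ∀ i, IdentDistrib (Y i) (Y 0) μ μ)
    (hmom : ∀ n : ℕ, Integrable (fun ω => |Y 0 ω| ^ n) μ)
    (lam : ℝ) (n l : ℕ) :
    probDegBellNum μ Y lam (l + n) =
      ∑ k ∈ Finset.range (n + 1), ∑ m ∈ Finset.range (l + 1),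
        (Nat.choose l m : ℝ) * (1 / (Nat.factorial k : ℝ)) *
        (∑ t ∈ (Finset.Nat.antidiagonalTuple k n).filter (fun t => ∀ i, 0 < t i),
          (Nat.multinomial Finset.univ t : ℝ) *
            ∫ ω, degFall lam ((∑ i ∈ Finset.range k, Y i ω) - (n : ℝ) * lam) (l - m) *
              ∏ i : Fin k, degFall lam (Y (i : ℕ) ω) (t i) ∂μ) *
        probDegBellNum μ Y lam m :=
  spivey_probDegBellNum_general μ Y hmeas hindep hident hmom lam n l
end

section
/- For all integers n, l ≥ 0 and all y ∈ ℝ, the Bell polynomials satisfy the Gould–Quaintance extension of Spivey's relation: φ_{l+n}(y) = Σ_{k=0}^{n} Σ_{m=0}^{l} C(l,m) {n \brace k} k^{l−m} y^k φ_m(y). -/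
open Finset

/-- The Stirling numbers of the second kind
`{n \brace k} = (1/k!) ∑_{j=0}^{k} (-1)^{k-j} C(k,j) j^n`. -/
noncomputable def stirling2 (n k : ℕ) : ℝ :=
  (1 / (Nat.factorial k : ℝ)) * ∑ j ∈ Finset.range (k + 1),
    (-1 : ℝ) ^ (k - j) * (Nat.choose k j : ℝ) * (j : ℝ) ^ n

/-- The Bell polynomials `φ_n(x) = ∑_{k=0}^{n} {n \brace k} x^k`. -/
noncomputable def bellPoly (n : ℕ) (x : ℝ) : ℝ :=
  ∑ k ∈ Finset.range (n + 1), stirling2 n k * x ^ k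

/-!
Let `L_y : ℝ[X] → ℝ` be the linear functional with `L_y (X^m) = φ_m(y)`. Once the explicit
`stirling2` is identified with Mathlib's recursively defined `Nat.stirlingSecond` (the `k`-th
forward difference at `0` of `x^n = ∑_j S(n,j) x(x-1)⋯(x-j+1)` is `k! S(n,k)`), the Bell
recurrence `φ_{m+1} = y ∑_j C(m,j) φ_j` says `L_y (X p) = y L_y (p(X+1))`. Combined with
`S(n+1,k+1) = (k+1) S(n,k+1) + S(n,k)`, induction on `n` gives
`L_y (q X^n) = ∑_k S(n,k) y^k L_y (q(X+k))` for every polynomial `q`; the theorem is the case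
`q = X^l`, expanded by the binomial theorem.
-/

open Nat Polynomial

theorem sum_stirlingSecond_succ_mul {R : Type*} [CommSemiring R] (n : ℕ) (G : ℕ → R) :
    ∑ k ∈ range (n + 2), (stirlingSecond (n + 1) k : R) * G k =
      ∑ k ∈ range (n + 1), (stirlingSecond n k : R) * (k * G k + G (k + 1)) := by
  set f : ℕ → R := fun k => stirlingSecond n k * (k * G k)
  have hshift : ∑ k ∈ range (n + 1), f (k + 1) = ∑ k ∈ range (n + 1), f k :=
    calc ∑ k ∈ range (n + 1), f (k + 1)
        = ∑ k ∈ range (n + 1), f (k + 1) + f 0 := by simp [f]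
      _ = ∑ k ∈ range (n + 1), f k + f (n + 1) := by
        rw [← sum_range_succ', ← sum_range_succ]
      _ = ∑ k ∈ range (n + 1), f k := by simp [f, stirlingSecond_eq_zero_of_lt n.lt_succ_self]
  calc ∑ k ∈ range (n + 2), (stirlingSecond (n + 1) k : R) * G k
      = ∑ k ∈ range (n + 1), (f (k + 1) + stirlingSecond n k * G (k + 1)) := by
        rw [sum_range_succ', stirlingSecond_succ_zero, Nat.cast_zero, zero_mul, add_zero]
        refine sum_congr rfl fun k _ => ?_
        simp only [f, stirlingSecond_succ_succ]
        push_cast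
        ring
    _ = ∑ k ∈ range (n + 1), (f k + stirlingSecond n k * G (k + 1)) := by
        rw [sum_add_distrib, sum_add_distrib, hshift]
    _ = _ := sum_congr rfl fun k _ => by simp only [f]; ring

theorem self_mul_descFactorial (x k : ℕ) :
    x * x.descFactorial k = k * x.descFactorial k + x.descFactorial (k + 1) := by
  rw [descFactorial_succ, ← add_mul]
  rcases le_or_gt k x with hk | hk
  · rw [Nat.add_sub_cancel' hk]
  · simp [descFactorial_eq_zero_iff_lt.mpr hk]

theorem pow_eq_sum_stirlingSecond_mul_descFactorial (x n : ℕ) :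
    (x ^ n : ℤ) = ∑ k ∈ range (n + 1), (stirlingSecond n k : ℤ) * x.descFactorial k := by
  induction n with
  | zero => simp
  | succ n ih =>
    rw [sum_stirlingSecond_succ_mul, pow_succ, ih, sum_mul]
    refine sum_congr rfl fun k _ => ?_
    rw [mul_assoc, mul_comm _ (x : ℤ)]
    exact_mod_cast congrArg (stirlingSecond n k * ·) (self_mul_descFactorial x k)

theorem factorial_mul_stirlingSecond (n k : ℕ) :
    (k ! * stirlingSecond n k : ℤ) =
      ∑ j ∈ range (k + 1), (-1) ^ (k - j) * k.choose j * (j : ℤ) ^ n := by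
  have hpow : (fun x : ℕ => (x : ℤ) ^ n) =
      ∑ j ∈ range (n + 1),
        (stirlingSecond n j * j ! : ℤ) • fun x : ℕ => (x.choose j : ℤ) := by
    ext x
    simp [pow_eq_sum_stirlingSecond_mul_descFactorial, descFactorial_eq_factorial_mul_choose,
      mul_assoc]
  calc (k ! * stirlingSecond n k : ℤ)
      = (fwdDiff 1)^[k] (fun x : ℕ => (x : ℤ) ^ n) 0 := by
        simp only [hpow, fwdDiff_iter_finsetSum, Finset.sum_apply, fwdDiff_iter_const_smul,
          Pi.smul_apply, fwdDiff_iter_choose_zero, smul_eq_mul, mul_ite, mul_one, mul_zero,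
          sum_ite_eq]
        split_ifs with hk
        · ring
        · simp [stirlingSecond_eq_zero_of_lt (by simpa using hk)]
    _ = ∑ j ∈ range (k + 1), (-1) ^ (k - j) * k.choose j * (j : ℤ) ^ n := by
        simp [fwdDiff_iter_eq_sum_shift]

theorem sum_choose_mul_stirlingSecond (m k : ℕ) :
    ∑ j ∈ range (m + 1), m.choose j * stirlingSecond j k = stirlingSecond (m + 1) (k + 1) := by
  induction m generalizing k with
  | zero => simp [stirlingSecond_succ_succ]
  | succ m ih =>
    have hsplit := sum_choose_succ_mul (R := ℕ) (fun j _ => stirlingSecond j k) m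
    simp only [Nat.cast_id] at hsplit
    rw [hsplit, ih, stirlingSecond_succ_succ (m + 1)]
    cases k with
    | zero => simp
    | succ k =>
      have hrec : ∑ j ∈ range (m + 1), m.choose j * stirlingSecond (j + 1) (k + 1) =
          (k + 1) * stirlingSecond (m + 1) (k + 2) + stirlingSecond (m + 1) (k + 1) := by
        rw [← ih, ← ih, mul_sum, ← sum_add_distrib]
        exact sum_congr rfl fun j _ => by rw [stirlingSecond_succ_succ]; ring
      rw [hrec]
      ring

theorem stirling2_eq_stirlingSecond (n k : ℕ) : stirling2 n k = stirlingSecond n k := by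
  have h : (k ! * stirlingSecond n k : ℝ) =
      ∑ j ∈ range (k + 1), (-1) ^ (k - j) * k.choose j * (j : ℝ) ^ n := by
    exact_mod_cast factorial_mul_stirlingSecond n k
  rw [stirling2, ← h]
  field_simp

theorem bellPoly_eq_sum_range {n N : ℕ} (hN : n < N) (y : ℝ) :
    bellPoly n y = ∑ k ∈ range N, (stirlingSecond n k : ℝ) * y ^ k := by
  have hvanish : ∑ k ∈ Ico (n + 1) N, (stirlingSecond n k : ℝ) * y ^ k = 0 :=
    sum_eq_zero fun k hk => by
      rw [stirlingSecond_eq_zero_of_lt (mem_Ico.mp hk).1, Nat.cast_zero, zero_mul]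
  rw [← sum_range_add_sum_Ico _ hN, hvanish, add_zero, bellPoly]
  simp only [stirling2_eq_stirlingSecond]

theorem bellPoly_succ (m : ℕ) (y : ℝ) :
    bellPoly (m + 1) y = y * ∑ j ∈ range (m + 1), (m.choose j : ℝ) * bellPoly j y := by
  have hinner : ∀ k, ∑ j ∈ range (m + 1), (m.choose j : ℝ) * stirlingSecond j k =
      stirlingSecond (m + 1) (k + 1) := fun k => by
    exact_mod_cast sum_choose_mul_stirlingSecond m k
  calc bellPoly (m + 1) y
      = ∑ k ∈ range (m + 1), (stirlingSecond (m + 1) (k + 1) : ℝ) * y ^ (k + 1) := by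
        simp [bellPoly, stirling2_eq_stirlingSecond, sum_range_succ' _ (m + 1)]
    _ = y * ∑ j ∈ range (m + 1), (m.choose j : ℝ) *
          ∑ k ∈ range (m + 1), (stirlingSecond j k : ℝ) * y ^ k := by
        simp_rw [← hinner, mul_sum, sum_mul]
        rw [sum_comm]
        exact sum_congr rfl fun _ _ => sum_congr rfl fun _ _ => by ring
    _ = y * ∑ j ∈ range (m + 1), (m.choose j : ℝ) * bellPoly j y := by
        congr 1
        refine sum_congr rfl fun j hj => ?_
        rw [bellPoly_eq_sum_range (mem_range.mp hj)]

noncomputable def bellEval (y : ℝ) : ℝ[X] →ₗ[ℝ] ℝ :=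
  lsum fun m => LinearMap.id.smulRight (bellPoly m y)

theorem bellEval_monomial (y : ℝ) (m : ℕ) (a : ℝ) :
    bellEval y (monomial m a) = a * bellPoly m y := by
  simp [bellEval]

theorem bellEval_X_pow (y : ℝ) (m : ℕ) : bellEval y (X ^ m) = bellPoly m y := by
  simp [X_pow_eq_monomial, bellEval_monomial]

theorem bellEval_X_add_C_pow (y c : ℝ) (l : ℕ) :
    bellEval y ((X + C c) ^ l) =
      ∑ m ∈ range (l + 1), (l.choose m : ℝ) * c ^ (l - m) * bellPoly m y := by
  rw [add_pow, map_sum]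
  refine sum_congr rfl fun m _ => ?_
  have hterm : X ^ m * C c ^ (l - m) * (l.choose m : ℝ[X]) =
      ((l.choose m : ℝ) * c ^ (l - m)) • X ^ m := by
    rw [smul_eq_C_mul]; simp only [map_mul, map_natCast, map_pow]; ring
  rw [hterm, map_smul, bellEval_X_pow, smul_eq_mul]

theorem bellEval_X_mul (y : ℝ) (p : ℝ[X]) :
    bellEval y (X * p) = y * bellEval y (p.comp (X + 1)) := by
  induction p using Polynomial.induction_on' with
  | add p q hp hq => rw [mul_add, add_comp, map_add, map_add, hp, hq, mul_add]
  | monomial m a =>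
    rw [X_mul_monomial, bellEval_monomial, monomial_comp, C_mul', map_smul, ← C_1,
      bellEval_X_add_C_pow, bellPoly_succ]
    simp only [one_pow, mul_one, smul_eq_mul]
    ring

theorem bellEval_mul_X_pow (y : ℝ) (n : ℕ) (q : ℝ[X]) :
    bellEval y (q * X ^ n) =
      ∑ k ∈ range (n + 1),
        (stirlingSecond n k : ℝ) * (y ^ k * bellEval y (q.comp (X + C (k : ℝ)))) := by
  induction n generalizing q with
  | zero => simp
  | succ n ih =>
    rw [_root_.pow_succ', ← mul_assoc, ih, sum_stirlingSecond_succ_mul]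
    refine sum_congr rfl fun k _ => ?_
    have hshift : (X + C (k : ℝ)).comp (X + 1) = X + C ((k + 1 : ℕ) : ℝ) := by
      simp only [map_natCast, add_comp, X_comp, natCast_comp, cast_add, cast_one, map_add, map_one]
      ring
    rw [mul_comp, X_comp, mul_add, map_add, mul_comm _ X, bellEval_X_mul, comp_assoc, hshift,
      mul_comm _ (C _), C_mul', map_smul, smul_eq_mul]
    ring

/-- The Gould–Quaintance extension of Spivey's relation to the Bell polynomials. -/
theorem spivey_gould_quaintance (n l : ℕ) (y : ℝ) :
    bellPoly (l + n) y =
      ∑ k ∈ Finset.range (n + 1), ∑ m ∈ Finset.range (l + 1),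
        (Nat.choose l m : ℝ) * stirling2 n k * (k : ℝ) ^ (l - m) * y ^ k * bellPoly m y := by
  rw [← bellEval_X_pow, pow_add, bellEval_mul_X_pow]
  simp_rw [X_pow_comp, bellEval_X_add_C_pow, stirling2_eq_stirlingSecond, mul_sum]
  exact sum_congr rfl fun k _ => sum_congr rfl fun m _ => by ring
end
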